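/- With notation as above, dim Y_M equals dim 𝔽̃ (equivalently, equality holds in Σ_{i, k≤r} n_{i,k} d_r ≤ Σ_{i≤r} ν_i d_r with d_1,…,d_{m−1} > 0) if and only if M is a block-diagonal matrix whose diagonal blocks have sizes ν_1, …, ν_m. -/
import Mathlib

/-- Index set of parts `ν_{i,j}` of a multi-composition. -/
abbrev MCIdx (m : ℕ) (a : Fin m → ℕ) := Σ i : Fin m, Fin (a i)

/-- The lexicographic order `(i,j) < (i',j')` on parts of a multi-composition. -/
def mcLex {m : ℕ} {a : Fin m → ℕ} (p q : MCIdx m a) : Prop :=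
  p.1 < q.1 ∨ (p.1 = q.1 ∧ (p.2 : ℕ) < (q.2 : ℕ))

instance {m : ℕ} {a : Fin m → ℕ} (p q : MCIdx m a) : Decidable (mcLex p q) := by
  unfold mcLex; infer_instance

lemma mcLex_asymm {m : ℕ} {a : Fin m → ℕ} {p q : MCIdx m a}
    (h : mcLex p q) (h' : mcLex q p) : False := by
  obtain ⟨p1, p2⟩ := p; obtain ⟨q1, q2⟩ := q
  simp only [mcLex, Fin.lt_def] at h h'
  rcases h with h | ⟨h, h2⟩ <;> rcases h' with h' | ⟨h', h2'⟩ <;>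
    simp_all [Fin.ext_iff] <;> omega

lemma mcLex_cases {m : ℕ} {a : Fin m → ℕ} (p q : MCIdx m a) :
    (mcLex p q ∧ ¬mcLex q p ∧ p ≠ q) ∨ (p = q ∧ ¬mcLex p q ∧ ¬mcLex q p) ∨
      (mcLex q p ∧ ¬mcLex p q ∧ p ≠ q) := by
  have tricho : mcLex p q ∨ p = q ∨ mcLex q p := by
    obtain ⟨p1, p2⟩ := p; obtain ⟨q1, q2⟩ := q
    rcases lt_trichotomy p1 q1 with h | h | h
    · exact Or.inl (Or.inl h)
    · subst h
      rcases lt_trichotomy (p2 : ℕ) (q2 : ℕ) with h2 | h2 | h2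
      · exact Or.inl (Or.inr ⟨rfl, h2⟩)
      · exact Or.inr (Or.inl (by simp [Fin.ext_iff, h2]))
      · exact Or.inr (Or.inr (Or.inr ⟨rfl, h2⟩))
    · exact Or.inr (Or.inr (Or.inl h))
  rcases tricho with h | h | h
  · exact Or.inl ⟨h, fun h' => (mcLex_asymm h h').elim,
      fun he => (mcLex_asymm (he ▸ h) (he ▸ h)).elim⟩
  · subst h
    exact Or.inr (Or.inl ⟨rfl, fun h' => (mcLex_asymm h' h').elim,
      fun h' => (mcLex_asymm h' h').elim⟩)
  · exact Or.inr (Or.inr ⟨h, fun h' => (mcLex_asymm h h').elim,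
      fun he => (mcLex_asymm (he ▸ h) (he ▸ h)).elim⟩)

/-- Key identity: the sum over the "strictly below" pairs plus the sum over the
"strictly above" pairs plus the sum of squared margins equals `ν²`. -/
lemma zsum (A : Type*) [Fintype A] [DecidableEq A] (L : A → A → Prop) [DecidableRel L]
    (hA : ∀ x y : A, (L x y ∧ ¬L y x ∧ x ≠ y) ∨ (x = y ∧ ¬L x y ∧ ¬L y x) ∨
      (L y x ∧ ¬L x y ∧ x ≠ y))
    (M : A → A → ℕ) (g : A → ℕ)
    (hrow : ∀ p, ∑ q, M p q = g p) (hcol : ∀ q, ∑ p, M p q = g q)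
    (ν : ℕ) (hν : ν = ∑ p, g p) :
    (∑ q ∈ Finset.univ.filter
        (fun q : (A × A) × (A × A) => L q.2.1 q.1.1 ∨ L q.2.2 q.1.2),
        M q.1.1 q.1.2 * M q.2.1 q.2.2)
      + (∑ q ∈ Finset.univ.filter
        (fun q : (A × A) × (A × A) => L q.1.1 q.2.1 ∧ L q.1.2 q.2.2),
        M q.1.1 q.1.2 * M q.2.1 q.2.2)
      + (∑ p : A, (g p) ^ 2) = ν ^ 2 := by
  classical
  have ptrow : ∀ q : (A × A) × (A × A),
      (if q.1.1 = q.2.1 then M q.1.1 q.1.2 * M q.2.1 q.2.2 else 0) =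
      (if q.1.1 = q.2.1 ∧ q.1.2 = q.2.2 then M q.1.1 q.1.2 * M q.2.1 q.2.2 else 0)
      + (if q.1.1 = q.2.1 ∧ L q.1.2 q.2.2 then M q.1.1 q.1.2 * M q.2.1 q.2.2 else 0)
      + (if q.2.1 = q.1.1 ∧ L q.2.2 q.1.2 then M q.1.1 q.1.2 * M q.2.1 q.2.2 else 0) := by
    rintro ⟨⟨x1, x2⟩, y1, y2⟩
    by_cases h0 : x1 = y1
    · subst h0
      rcases hA x2 y2 with ⟨h2, h2', h2''⟩ | ⟨h2, h2', h2''⟩ | ⟨h2, h2', h2''⟩ <;> simp_all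
    · have h0' : ¬ y1 = x1 := fun h => h0 h.symm
      simp [h0, h0']
  have ptcol : ∀ q : (A × A) × (A × A),
      (if q.1.2 = q.2.2 then M q.1.1 q.1.2 * M q.2.1 q.2.2 else 0) =
      (if q.1.1 = q.2.1 ∧ q.1.2 = q.2.2 then M q.1.1 q.1.2 * M q.2.1 q.2.2 else 0)
      + (if q.1.2 = q.2.2 ∧ L q.1.1 q.2.1 then M q.1.1 q.1.2 * M q.2.1 q.2.2 else 0)
      + (if q.2.2 = q.1.2 ∧ L q.2.1 q.1.1 then M q.1.1 q.1.2 * M q.2.1 q.2.2 else 0) := by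
    rintro ⟨⟨x1, x2⟩, y1, y2⟩
    by_cases h0 : x2 = y2
    · subst h0
      rcases hA x1 y1 with ⟨h2, h2', h2''⟩ | ⟨h2, h2', h2''⟩ | ⟨h2, h2', h2''⟩ <;> simp_all
    · have h0' : ¬ y2 = x2 := fun h => h0 h.symm
      simp [h0, h0']
  have hMtot : ∑ x : A × A, M x.1 x.2 = ν := by
    rw [Fintype.sum_prod_type]; simp only [hrow]; exact hν.symm
  -- total sum is ν²
  have htot : (∑ q : (A × A) × (A × A), M q.1.1 q.1.2 * M q.2.1 q.2.2) = ν ^ 2 := by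
    rw [Fintype.sum_prod_type]
    dsimp only
    rw [← Finset.sum_mul_sum, hMtot, sq]
  -- five-fold pointwise partition
  have hpart : ∀ q : (A × A) × (A × A), M q.1.1 q.1.2 * M q.2.1 q.2.2 =
      (if L q.2.1 q.1.1 ∨ L q.2.2 q.1.2 then M q.1.1 q.1.2 * M q.2.1 q.2.2 else 0)
      + (if L q.1.1 q.2.1 ∧ L q.1.2 q.2.2 then M q.1.1 q.1.2 * M q.2.1 q.2.2 else 0)
      + (if q.1.1 = q.2.1 ∧ q.1.2 = q.2.2 then M q.1.1 q.1.2 * M q.2.1 q.2.2 else 0)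
      + (if q.1.1 = q.2.1 ∧ L q.1.2 q.2.2 then M q.1.1 q.1.2 * M q.2.1 q.2.2 else 0)
      + (if q.1.2 = q.2.2 ∧ L q.1.1 q.2.1 then M q.1.1 q.1.2 * M q.2.1 q.2.2 else 0) := by
    rintro ⟨⟨x1, x2⟩, y1, y2⟩
    rcases hA x1 y1 with ⟨h1, h1', h1''⟩ | ⟨h1, h1', h1''⟩ | ⟨h1, h1', h1''⟩ <;>
      rcases hA x2 y2 with ⟨h2, h2', h2''⟩ | ⟨h2, h2', h2''⟩ | ⟨h2, h2', h2''⟩ <;>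
      simp_all
  have hsplit : (∑ q : (A × A) × (A × A), M q.1.1 q.1.2 * M q.2.1 q.2.2) =
      (∑ q : (A × A) × (A × A),
        if L q.2.1 q.1.1 ∨ L q.2.2 q.1.2 then M q.1.1 q.1.2 * M q.2.1 q.2.2 else 0)
      + (∑ q : (A × A) × (A × A),
        if L q.1.1 q.2.1 ∧ L q.1.2 q.2.2 then M q.1.1 q.1.2 * M q.2.1 q.2.2 else 0)
      + (∑ q : (A × A) × (A × A),
        if q.1.1 = q.2.1 ∧ q.1.2 = q.2.2 then M q.1.1 q.1.2 * M q.2.1 q.2.2 else 0)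
      + (∑ q : (A × A) × (A × A),
        if q.1.1 = q.2.1 ∧ L q.1.2 q.2.2 then M q.1.1 q.1.2 * M q.2.1 q.2.2 else 0)
      + (∑ q : (A × A) × (A × A),
        if q.1.2 = q.2.2 ∧ L q.1.1 q.2.1 then M q.1.1 q.1.2 * M q.2.1 q.2.2 else 0) := by
    rw [Finset.sum_congr rfl fun q _ => hpart q]
    rw [Finset.sum_add_distrib, Finset.sum_add_distrib, Finset.sum_add_distrib,
      Finset.sum_add_distrib]
  -- row identity
  have hrowid : (∑ q ∈ Finset.univ.filter
      (fun q : (A × A) × (A × A) => q.1.1 = q.2.1),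
      M q.1.1 q.1.2 * M q.2.1 q.2.2) = ∑ p : A, (g p) ^ 2 := by
    rw [Finset.sum_filter, Fintype.sum_prod_type]
    have : ∀ x : A × A, (∑ y : A × A, if x.1 = y.1 then M x.1 x.2 * M y.1 y.2 else 0)
        = M x.1 x.2 * g x.1 := by
      intro x
      rw [Fintype.sum_prod_type]
      simp [Finset.sum_ite_eq, ← Finset.mul_sum, hrow]
    simp only [this]
    rw [Fintype.sum_prod_type]
    simp [← Finset.sum_mul, hrow, sq]
  -- column identity
  have hcolid : (∑ q ∈ Finset.univ.filter
      (fun q : (A × A) × (A × A) => q.1.2 = q.2.2),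
      M q.1.1 q.1.2 * M q.2.1 q.2.2) = ∑ p : A, (g p) ^ 2 := by
    rw [Finset.sum_filter, Fintype.sum_prod_type]
    have : ∀ x : A × A, (∑ y : A × A, if x.2 = y.2 then M x.1 x.2 * M y.1 y.2 else 0)
        = M x.1 x.2 * g x.2 := by
      intro x
      rw [Fintype.sum_prod_type, Finset.sum_comm]
      simp [Finset.sum_ite_eq, ← Finset.sum_mul, hcol, mul_comm]
    simp only [this]
    rw [Fintype.sum_prod_type, Finset.sum_comm]
    simp [← Finset.sum_mul, hcol, sq, mul_comm]
  -- row split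
  have hrowsplit : (∑ q ∈ Finset.univ.filter
      (fun q : (A × A) × (A × A) => q.1.1 = q.2.1),
      M q.1.1 q.1.2 * M q.2.1 q.2.2) =
      (∑ q : (A × A) × (A × A),
        if q.1.1 = q.2.1 ∧ q.1.2 = q.2.2 then M q.1.1 q.1.2 * M q.2.1 q.2.2 else 0)
      + (∑ q : (A × A) × (A × A),
        if q.1.1 = q.2.1 ∧ L q.1.2 q.2.2 then M q.1.1 q.1.2 * M q.2.1 q.2.2 else 0)
      + (∑ q : (A × A) × (A × A),
        if q.2.1 = q.1.1 ∧ L q.2.2 q.1.2 then M q.1.1 q.1.2 * M q.2.1 q.2.2 else 0) := by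
    rw [Finset.sum_filter]
    rw [Finset.sum_congr rfl (fun (q : (A × A) × (A × A)) _ => ptrow q)]
    rw [Finset.sum_add_distrib, Finset.sum_add_distrib]
  -- column split
  have hcolsplit : (∑ q ∈ Finset.univ.filter
      (fun q : (A × A) × (A × A) => q.1.2 = q.2.2),
      M q.1.1 q.1.2 * M q.2.1 q.2.2) =
      (∑ q : (A × A) × (A × A),
        if q.1.1 = q.2.1 ∧ q.1.2 = q.2.2 then M q.1.1 q.1.2 * M q.2.1 q.2.2 else 0)
      + (∑ q : (A × A) × (A × A),
        if q.1.2 = q.2.2 ∧ L q.1.1 q.2.1 then M q.1.1 q.1.2 * M q.2.1 q.2.2 else 0)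
      + (∑ q : (A × A) × (A × A),
        if q.2.2 = q.1.2 ∧ L q.2.1 q.1.1 then M q.1.1 q.1.2 * M q.2.1 q.2.2 else 0) := by
    rw [Finset.sum_filter]
    rw [Finset.sum_congr rfl (fun (q : (A × A) × (A × A)) _ => ptcol q)]
    rw [Finset.sum_add_distrib, Finset.sum_add_distrib]
  -- swap identities
  have hswap2 : (∑ q : (A × A) × (A × A),
      if q.2.1 = q.1.1 ∧ L q.2.2 q.1.2 then M q.1.1 q.1.2 * M q.2.1 q.2.2 else 0)
      = (∑ q : (A × A) × (A × A),
      if q.1.1 = q.2.1 ∧ L q.1.2 q.2.2 then M q.1.1 q.1.2 * M q.2.1 q.2.2 else 0) := by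
    apply Fintype.sum_equiv (Equiv.prodComm _ _)
    intro q
    dsimp [Equiv.prodComm]
    rw [mul_comm (M q.1.1 q.1.2)]
  have hswap3 : (∑ q : (A × A) × (A × A),
      if q.2.2 = q.1.2 ∧ L q.2.1 q.1.1 then M q.1.1 q.1.2 * M q.2.1 q.2.2 else 0)
      = (∑ q : (A × A) × (A × A),
      if q.1.2 = q.2.2 ∧ L q.1.1 q.2.1 then M q.1.1 q.1.2 * M q.2.1 q.2.2 else 0) := by
    apply Fintype.sum_equiv (Equiv.prodComm _ _)
    intro q
    dsimp [Equiv.prodComm]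
    rw [mul_comm (M q.1.1 q.1.2)]
  -- conclude via filter-to-ite conversions
  rw [Finset.sum_filter, Finset.sum_filter]
  rw [hswap2] at hrowsplit
  rw [hswap3] at hcolsplit
  omega

/-- With the notation of the previous statement (strata `Y_M` of
`Y = 𝔽̃ ×_E 𝔽̃`, block sums `n i k` of `M ∈ Θ`, and `d_1,…,d_{m-1} > 0`),
`dim Y_M = dim 𝔽̃ = ν² − Σ_{i,j} ν_{i,j}² + Σ_{i ≤ r} ν_i d_r` — equivalently,
equality holds in `Σ_{i,k ≤ r} n_{i,k} d_r ≤ Σ_{i ≤ r} ν_i d_r` — if and only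
if `M` is a block-diagonal matrix whose diagonal blocks have sizes
`ν_1, …, ν_m` (i.e. `n i k = 0` for `i ≠ k`). -/
theorem stratum_dimension_eq_iff_block_diagonal
    (m : ℕ) (a : Fin m → ℕ) (νp : ∀ i : Fin m, Fin (a i) → ℕ) (d : Fin m → ℕ)
    (hd : ∀ i : Fin m, (i : ℕ) + 1 < m → 0 < d i)
    (M : MCIdx m a → MCIdx m a → ℕ)
    (hrow : ∀ p, ∑ q, M p q = νp p.1 p.2)
    (hcol : ∀ q, ∑ p, M p q = νp q.1 q.2)
    (n : Fin m → Fin m → ℕ)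
    (hn : ∀ i k, n i k = ∑ j, ∑ l, M ⟨i, j⟩ ⟨k, l⟩)
    (ν : ℕ) (hν : ν = ∑ p : MCIdx m a, νp p.1 p.2)
    (νblk : Fin m → ℕ) (hνblk : ∀ i, νblk i = ∑ j, νp i j)
    (dimOM dimZM dimYM : ℕ)
    (hOM : dimOM = ∑ q ∈ Finset.univ.filter
        (fun q : (MCIdx m a × MCIdx m a) × (MCIdx m a × MCIdx m a) =>
          mcLex q.2.1 q.1.1 ∨ mcLex q.2.2 q.1.2),
        M q.1.1 q.1.2 * M q.2.1 q.2.2)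
    (hZM : dimZM = dimOM + ∑ q ∈ Finset.univ.filter
        (fun q : (MCIdx m a × MCIdx m a) × (MCIdx m a × MCIdx m a) =>
          mcLex q.1.1 q.2.1 ∧ mcLex q.1.2 q.2.2),
        M q.1.1 q.1.2 * M q.2.1 q.2.2)
    (hYM : dimYM = dimZM + ∑ r, d r *
        ∑ p ∈ Finset.univ.filter (fun p : Fin m × Fin m => p.1 ≤ r ∧ p.2 ≤ r),
          n p.1 p.2) :
    dimYM = ν ^ 2 - (∑ p : MCIdx m a, (νp p.1 p.2) ^ 2)
        + ∑ r, d r * ∑ i ∈ Finset.univ.filter (fun i : Fin m => i ≤ r), νblk i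
      ↔ ∀ i k, i ≠ k → n i k = 0 := by
  classical
  have hZsum : dimZM + (∑ p : MCIdx m a, (νp p.1 p.2) ^ 2) = ν ^ 2 := by
    rw [hZM, hOM]
    exact zsum (MCIdx m a) mcLex mcLex_cases M (fun p => νp p.1 p.2) hrow hcol ν hν
  -- block-row sums
  have hnrow : ∀ i, ∑ k, n i k = νblk i := by
    intro i
    simp only [hn]
    rw [Finset.sum_comm]
    have key : ∀ j : Fin (a i), (∑ k, ∑ l, M ⟨i, j⟩ ⟨k, l⟩) = νp i j := by
      intro j
      rw [← hrow ⟨i, j⟩, ← Finset.univ_sigma_univ, Finset.sum_sigma]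
    rw [Finset.sum_congr rfl fun j _ => key j, hνblk]
  have hncol : ∀ k, ∑ i, n i k = νblk k := by
    intro k
    simp only [hn]
    calc (∑ i, ∑ j, ∑ l, M ⟨i, j⟩ ⟨k, l⟩)
        = ∑ i, ∑ l, ∑ j, M ⟨i, j⟩ ⟨k, l⟩ :=
          Finset.sum_congr rfl fun i _ => Finset.sum_comm
      _ = ∑ l, ∑ i, ∑ j, M ⟨i, j⟩ ⟨k, l⟩ := Finset.sum_comm
      _ = ∑ l, ∑ p : MCIdx m a, M p ⟨k, l⟩ := Finset.sum_congr rfl fun l _ => by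
          rw [← Finset.univ_sigma_univ, Finset.sum_sigma]
      _ = ∑ l, νp k l := by simp only [hcol]
      _ = νblk k := (hνblk k).symm
  -- split the margin sums
  have hBU : ∀ r : Fin m, (∑ i ∈ Finset.univ.filter (fun i : Fin m => i ≤ r), νblk i)
      = (∑ p ∈ Finset.univ.filter (fun p : Fin m × Fin m => p.1 ≤ r ∧ p.2 ≤ r), n p.1 p.2)
      + (∑ p ∈ Finset.univ.filter (fun p : Fin m × Fin m => p.1 ≤ r ∧ r < p.2), n p.1 p.2) := by
    intro r
    rw [Finset.sum_filter, Finset.sum_filter, Finset.sum_filter,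
      Fintype.sum_prod_type, Fintype.sum_prod_type]
    rw [← Finset.sum_add_distrib]
    apply Finset.sum_congr rfl
    intro i _
    rw [← Finset.sum_add_distrib]
    by_cases h : i ≤ r
    · simp only [h, true_and, if_pos]
      rw [← hnrow i]
      apply Finset.sum_congr rfl
      intro k _
      rcases le_or_gt k r with h2 | h2
      · simp [h2, h2.not_gt]
      · simp [h2, h2.not_ge]
    · simp [h]
  have hsplitd : (∑ r, d r * ∑ i ∈ Finset.univ.filter (fun i : Fin m => i ≤ r), νblk i)
      = (∑ r, d r * ∑ p ∈ Finset.univ.filter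
          (fun p : Fin m × Fin m => p.1 ≤ r ∧ p.2 ≤ r), n p.1 p.2)
      + (∑ r, d r * ∑ p ∈ Finset.univ.filter
          (fun p : Fin m × Fin m => p.1 ≤ r ∧ r < p.2), n p.1 p.2) := by
    rw [← Finset.sum_add_distrib]
    exact Finset.sum_congr rfl fun r _ => by rw [hBU r, mul_add]
  have hν2 : ν ^ 2 - (∑ p : MCIdx m a, (νp p.1 p.2) ^ 2) = dimZM := by omega
  rw [hYM, hν2, hsplitd]
  have hred : (dimZM + ∑ r, d r * ∑ p ∈ Finset.univ.filter
        (fun p : Fin m × Fin m => p.1 ≤ r ∧ p.2 ≤ r), n p.1 p.2)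
      = dimZM + ((∑ r, d r * ∑ p ∈ Finset.univ.filter
          (fun p : Fin m × Fin m => p.1 ≤ r ∧ p.2 ≤ r), n p.1 p.2)
      + (∑ r, d r * ∑ p ∈ Finset.univ.filter
          (fun p : Fin m × Fin m => p.1 ≤ r ∧ r < p.2), n p.1 p.2))
      ↔ (∑ r, d r * ∑ p ∈ Finset.univ.filter
          (fun p : Fin m × Fin m => p.1 ≤ r ∧ r < p.2), n p.1 p.2) = 0 := by
    omega
  rw [hred, Finset.sum_eq_zero_iff]
  constructor
  · intro h
    have hupper : ∀ i k : Fin m, i < k → n i k = 0 := by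
      intro i k hik
      have hkm : (k : ℕ) < m := k.isLt
      have hik' : (i : ℕ) < (k : ℕ) := hik
      have hr : (k : ℕ) - 1 < m := by omega
      set r : Fin m := ⟨(k : ℕ) - 1, hr⟩ with hrdef
      have hdr : 0 < d r := hd r (by simp only [hrdef]; omega)
      have hU : (∑ p ∈ Finset.univ.filter
          (fun p : Fin m × Fin m => p.1 ≤ r ∧ r < p.2), n p.1 p.2) = 0 := by
        have := h r (Finset.mem_univ r)
        rcases Nat.mul_eq_zero.mp this with h' | h'
        · omega
        · exact h'
      have hmem : (i, k) ∈ Finset.univ.filter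
          (fun p : Fin m × Fin m => p.1 ≤ r ∧ r < p.2) := by
        simp only [Finset.mem_filter, Finset.mem_univ, true_and]
        refine ⟨?_, ?_⟩
        · rw [Fin.le_def]; simp only [hrdef]; omega
        · rw [Fin.lt_def]; simp only [hrdef]; omega
      exact (Finset.sum_eq_zero_iff.mp hU) (i, k) hmem
    have hlow : ∀ N : ℕ, ∀ k : Fin m, (k : ℕ) = N → ∀ i, k < i → n i k = 0 := by
      intro N
      induction N using Nat.strong_induction_on with
      | _ N ih =>
        intro k hk i hki
        have hrowk : νblk k = n k k := by
          rw [← hnrow k]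
          rw [Finset.sum_eq_single k]
          · intro k' _ hne
            rcases lt_or_gt_of_ne hne with h' | h'
            · exact ih (k' : ℕ) (by omega) k' rfl k (by exact h')
            · exact hupper k k' h'
          · intro habs
            exact absurd (Finset.mem_univ k) habs
        have hcolk : (∑ i', n i' k) = n k k := by rw [hncol k, hrowk]
        have h1 : n k k + ∑ x ∈ Finset.univ.erase k, n x k = ∑ i', n i' k :=
          Finset.add_sum_erase _ (fun x => n x k) (Finset.mem_univ k)
        have h2 : n i k ≤ ∑ x ∈ Finset.univ.erase k, n x k :=
          Finset.single_le_sum (fun x _ => Nat.zero_le (n x k))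
            (Finset.mem_erase.mpr ⟨ne_of_gt hki, Finset.mem_univ i⟩)
        omega
    intro i k hik
    rcases lt_or_gt_of_ne hik with h' | h'
    · exact hupper i k h'
    · exact hlow (k : ℕ) k rfl i h'
  · intro h r _
    have : (∑ p ∈ Finset.univ.filter
        (fun p : Fin m × Fin m => p.1 ≤ r ∧ r < p.2), n p.1 p.2) = 0 := by
      apply Finset.sum_eq_zero
      intro p hp
      simp only [Finset.mem_filter, Finset.mem_univ, true_and] at hp
      exact h p.1 p.2 (ne_of_lt (lt_of_le_of_lt hp.1 hp.2))
    rw [this, mul_zero]
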